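/- arXiv:1402.3905 — 5 statements merged into one kernel-verified Lean document; each statement's English description precedes it below -/
import Mathlib

section
/- For g ≥ 3, the abelianization of G_C(g) is isomorphic to Z/2 ⊕ Z/2 if g is odd, and to Z/2 ⊕ Z/2 ⊕ Z/2 if g is even. Moreover, for g odd the abelianization is generated by the images of t_1 and s, and for g even by the images of t_1, s and ρ. -/
open FreeGroup in
/-- Relations (C1)-(C8). The generator `Sum.inl i` is `t_{i+1}`, `Sum.inr false` is `s`,
and `Sum.inr true` is `ρ`. -/
def relsC (g : ℕ) : Set (FreeGroup (Fin (g-1) ⊕ Bool)) :=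
  -- (C1)
  {r | ∃ j k : Fin (g-1), ((j : ℕ) + 1 < k ∨ (k : ℕ) + 1 < j) ∧
        r = of (.inl k) * of (.inl j) * (of (.inl j) * of (.inl k))⁻¹} ∪
  -- (C2)
  {r | ∃ j k : Fin (g-1), (j : ℕ) + 1 = k ∧
        r = of (.inl j) * of (.inl k) * of (.inl j) *
            (of (.inl k) * of (.inl j) * of (.inl k))⁻¹} ∪
  -- (C3)
  {(List.ofFn (fun i : Fin (g-1) => of (Sum.inl i : Fin (g-1) ⊕ Bool))).prod ^ g *
      (if Odd g then (of (Sum.inr true : Fin (g-1) ⊕ Bool))⁻¹ else 1)} ∪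
  -- (C4)
  {of (Sum.inr false : Fin (g-1) ⊕ Bool) ^ 2} ∪
  -- (C5)  s t_j s = t_j⁻¹
  {r | ∃ j : Fin (g-1),
        r = of (.inr false) * of (.inl j) * of (.inr false) * of (.inl j)} ∪
  -- (C6)
  {of (Sum.inr true : Fin (g-1) ⊕ Bool) ^ 2} ∪
  -- (C7)  ρ t_j ρ = t_j
  {r | ∃ j : Fin (g-1),
        r = of (.inr true) * of (.inl j) * of (.inr true) * (of (.inl j))⁻¹} ∪
  -- (C8)  ρ s ρ = s
  {of (Sum.inr true : Fin (g-1) ⊕ Bool) * of (.inr false) * of (.inr true) *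
      (of (.inr false))⁻¹}

/-- `G_C(g)`, a presentation of the hyperelliptic mapping class group `M^h(N_g)`. -/
def GC (g : ℕ) : Type := PresentedGroup (relsC g)

instance (g : ℕ) : Group (GC g) := by unfold GC; infer_instance

/-- The generator `t_{i+1}` of `G_C(g)`. -/
def GC.t {g : ℕ} (i : Fin (g-1)) : GC g := PresentedGroup.of (rels := relsC g) (Sum.inl i)

/-- The generator `s` of `G_C(g)`. -/
def GC.s (g : ℕ) : GC g := PresentedGroup.of (rels := relsC g) (Sum.inr false)

/-- The generator `ρ` of `G_C(g)`. -/
def GC.ρ (g : ℕ) : GC g := PresentedGroup.of (rels := relsC g) (Sum.inr true)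

/-!
In the abelianization, the braid relations (C2) identify all the `t_j`, and (C5) together with
`s² = 1` makes them involutions; for `g` odd, (C3) then reads `ρ = t_1 ^ (g (g - 1)) = 1`.
Conversely, sending every `t_j` to an involution `x`, `s` to an involution `y` and `ρ` to an
involution `z` of an abelian group (with `z = 1` when `g` is odd) respects all the relations, and
the basis vectors of `(ℤ/2)²`, resp. `(ℤ/2)³`, give the inverse isomorphism.
-/

lemma pow_eq_one_of_sq_eq_one {M : Type*} [Monoid M] {x : M} (hx : x ^ 2 = 1) {n : ℕ}
    (hn : Even n) : x ^ n = 1 := by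
  obtain ⟨k, rfl⟩ := hn.two_dvd
  rw [pow_mul, hx, one_pow]

section ZModTwo

variable {A : Type*} [Group A]

def zmodTwoHom (x : A) (hx : x ^ 2 = 1) : ZMod 2 →+ Additive A :=
  ZMod.lift 2 ⟨zmultiplesHom _ (Additive.ofMul x), by
    simpa [← ofMul_zpow] using congrArg Additive.ofMul hx⟩

@[simp] lemma zmodTwoHom_one (x : A) (hx : x ^ 2 = 1) :
    zmodTwoHom x hx 1 = Additive.ofMul x := by
  rw [← Int.cast_one, zmodTwoHom, ZMod.lift_coe]
  simp

end ZModTwo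

lemma closure_ofAdd_zmod_two_prod : Subgroup.closure
    {Multiplicative.ofAdd ((1 : ZMod 2), (0 : ZMod 2)), Multiplicative.ofAdd (0, 1)} = ⊤ := by
  rw [eq_top_iff]
  rintro m -
  obtain ⟨⟨p, q⟩, rfl⟩ := Multiplicative.ofAdd.surjective m
  have h : Multiplicative.ofAdd (p, q) =
      Multiplicative.ofAdd ((1 : ZMod 2), (0 : ZMod 2)) ^ p.val *
        Multiplicative.ofAdd (0, 1) ^ q.val := by
    ext <;> simp
  rw [h]
  exact mul_mem (pow_mem (Subgroup.subset_closure (by simp)) _)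
    (pow_mem (Subgroup.subset_closure (by simp)) _)

lemma closure_ofAdd_zmod_two_prod_three : Subgroup.closure
    {Multiplicative.ofAdd ((1 : ZMod 2), (0 : ZMod 2), (0 : ZMod 2)),
      Multiplicative.ofAdd (0, 1, 0), Multiplicative.ofAdd (0, 0, 1)} = ⊤ := by
  rw [eq_top_iff]
  rintro m -
  obtain ⟨⟨p, q, r⟩, rfl⟩ := Multiplicative.ofAdd.surjective m
  have h : Multiplicative.ofAdd (p, q, r) =
      Multiplicative.ofAdd ((1 : ZMod 2), (0 : ZMod 2), (0 : ZMod 2)) ^ p.val *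
        Multiplicative.ofAdd (0, 1, 0) ^ q.val * Multiplicative.ofAdd (0, 0, 1) ^ r.val := by
    ext <;> simp
  rw [h]
  exact mul_mem (mul_mem (pow_mem (Subgroup.subset_closure (by simp)) _)
    (pow_mem (Subgroup.subset_closure (by simp)) _)) (pow_mem (Subgroup.subset_closure (by simp)) _)

namespace GC

open Abelianization (of)

variable {g : ℕ}

-- `relsC g` is the left-nested union (C1) ∪ … ∪ (C8); the `.inl`/`.inr` chains pick the part.
lemma s_sq : s g ^ 2 = 1 :=
  PresentedGroup.one_of_mem (.inl <| .inl <| .inl <| .inl <| .inr rfl)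

lemma ρ_sq : ρ g ^ 2 = 1 :=
  PresentedGroup.one_of_mem (.inl <| .inl <| .inr rfl)

lemma s_mul_t_mul_s_mul_t (j : Fin (g-1)) : s g * t j * s g * t j = 1 :=
  PresentedGroup.one_of_mem (.inl <| .inl <| .inl <| .inr ⟨j, rfl⟩)

lemma t_braid {j k : Fin (g-1)} (h : (j : ℕ) + 1 = k) : t j * t k * t j = t k * t j * t k :=
  mul_inv_eq_one.1 <| PresentedGroup.one_of_mem
    (.inl <| .inl <| .inl <| .inl <| .inl <| .inl <| .inr ⟨j, k, h, rfl⟩)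

lemma prod_t_pow : (List.ofFn (t (g := g))).prod ^ g = if Odd g then ρ g else 1 := by
  have h : (List.ofFn (t (g := g))).prod ^ g * (if Odd g then (ρ g)⁻¹ else 1) = 1 := by
    have h := PresentedGroup.one_of_mem (rels := relsC g)
      (.inl <| .inl <| .inl <| .inl <| .inl <| .inr rfl)
    rwa [_root_.map_mul, _root_.map_pow, map_list_prod, List.map_ofFn,
      apply_ite (PresentedGroup.mk (relsC g)), _root_.map_inv, _root_.map_one] at h
  split_ifs at h ⊢
  · exact mul_inv_eq_one.1 h
  · rwa [mul_one] at h

lemma of_s_sq : of (s g) ^ 2 = 1 := by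
  rw [← map_pow, s_sq, map_one]

lemma of_ρ_sq : of (ρ g) ^ 2 = 1 := by
  rw [← map_pow, ρ_sq, map_one]

lemma of_t_sq (j : Fin (g-1)) : of (t j) ^ 2 = 1 := by
  have h : (of (s g) * of (t j)) ^ 2 = 1 := by
    simpa [pow_two, ← mul_assoc] using congrArg of (s_mul_t_mul_s_mul_t j)
  rwa [mul_pow, of_s_sq, one_mul] at h

lemma of_t_eq_of_t_of_succ {j k : Fin (g-1)} (h : (j : ℕ) + 1 = k) : of (t j) = of (t k) := by
  have h := congrArg of (t_braid h)
  simp only [map_mul] at h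
  rw [mul_comm (of (t k))] at h
  exact mul_left_cancel h

lemma of_t_eq_of_t_zero (j : Fin (g-1)) : of (t j) = of (t ⟨0, j.pos⟩) := by
  obtain ⟨n, hn⟩ := j
  induction n with
  | zero => rfl
  | succ n ih => exact (of_t_eq_of_t_of_succ (j := ⟨n, by omega⟩) rfl).symm.trans (ih _)

lemma of_t_eq_of_t (j k : Fin (g-1)) : of (t j) = of (t k) :=
  (of_t_eq_of_t_zero j).trans (of_t_eq_of_t_zero k).symm

lemma of_prod_t (i : Fin (g-1)) : of (List.ofFn (t (g := g))).prod = of (t i) ^ (g-1) := by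
  rw [map_list_prod, List.map_ofFn, List.prod_ofFn]
  simp [of_t_eq_of_t _ i]

lemma of_ρ_eq_one_of_odd (i : Fin (g-1)) (hodd : Odd g) : of (ρ g) = 1 := by
  have h := congrArg of (prod_t_pow (g := g))
  rw [if_pos hodd, map_pow, of_prod_t i, ← pow_mul'] at h
  rw [← h, pow_eq_one_of_sq_eq_one (of_t_sq i) (Nat.even_mul_pred_self g)]

lemma closure_eq_top_of_mem (i : Fin (g-1)) {S : Set (Abelianization (GC g))}
    (ht : of (t i) ∈ S) (hs : of (s g) ∈ S) (hρ : of (ρ g) ∈ Subgroup.closure S) :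
    Subgroup.closure S = ⊤ := by
  have hgen : ∀ x : GC g, of x ∈ Subgroup.closure S := by
    refine PresentedGroup.generated_by (relsC g) ((Subgroup.closure S).comap of) ?_
    rintro (j | _ | _)
    · exact Subgroup.subset_closure (of_t_eq_of_t j i ▸ ht)
    · exact Subgroup.subset_closure hs
    · exact hρ
  rw [eq_top_iff]
  rintro x -
  obtain ⟨x, rfl⟩ := QuotientGroup.mk_surjective x
  exact hgen x

section Lift

variable {M : Type*} [CommGroup M] {x y z : M}

lemma lift_rels_eq_one (hx : x ^ 2 = 1) (hy : y ^ 2 = 1) (hz : z ^ 2 = 1)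
    (hzo : Odd g → z = 1) (r : FreeGroup (Fin (g-1) ⊕ Bool)) (hr : r ∈ relsC g) :
    FreeGroup.lift (Sum.elim (fun _ => x) (fun b => bif b then z else y)) r = 1 := by
  obtain ((((((⟨j, k, -, rfl⟩ | ⟨j, k, -, rfl⟩) | rfl) | rfl) | ⟨j, rfl⟩) | rfl) | ⟨j, rfl⟩) |
    rfl := hr
  all_goals simp only [_root_.map_mul, _root_.map_inv, _root_.map_pow, FreeGroup.lift_apply_of,
    Sum.elim_inl, Sum.elim_inr, cond_true, cond_false]
  · exact mul_inv_cancel _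
  · exact mul_inv_cancel _
  · rw [map_list_prod, List.map_ofFn, List.prod_ofFn, apply_ite (FreeGroup.lift _)]
    simp only [Function.comp_apply, FreeGroup.lift_apply_of, Sum.elim_inl, Finset.prod_const,
      Finset.card_univ, Fintype.card_fin, ← pow_mul']
    rw [pow_eq_one_of_sq_eq_one hx (Nat.even_mul_pred_self g), one_mul]
    split_ifs with hodd
    · simp [hzo hodd]
    · rfl
  · exact hy
  · rw [show y * x * y * x = (y * x) ^ 2 by rw [pow_two, ← mul_assoc], mul_pow, hx, hy, one_mul]
  · exact hz
  · rw [mul_right_comm z x z, mul_inv_cancel_right, ← pow_two, hz]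
  · rw [mul_right_comm z y z, mul_inv_cancel_right, ← pow_two, hz]

def abLift (hx : x ^ 2 = 1) (hy : y ^ 2 = 1) (hz : z ^ 2 = 1) (hzo : Odd g → z = 1) :
    Abelianization (GC g) →* M :=
  Abelianization.lift (PresentedGroup.toGroup (lift_rels_eq_one hx hy hz hzo))

variable (hx : x ^ 2 = 1) (hy : y ^ 2 = 1) (hz : z ^ 2 = 1) (hzo : Odd g → z = 1)

@[simp] lemma abLift_of_t (i : Fin (g-1)) : abLift hx hy hz hzo (of (t i)) = x :=
  (Abelianization.lift_apply_of _ _).trans (PresentedGroup.toGroup.of _)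

@[simp] lemma abLift_of_s : abLift hx hy hz hzo (of (s g)) = y :=
  (Abelianization.lift_apply_of _ _).trans (PresentedGroup.toGroup.of _)

@[simp] lemma abLift_of_ρ : abLift hx hy hz hzo (of (ρ g)) = z :=
  (Abelianization.lift_apply_of _ _).trans (PresentedGroup.toGroup.of _)

end Lift

lemma closure_of_t_of_s_of_ρ (i : Fin (g-1)) :
    Subgroup.closure {of (t i), of (s g), of (ρ g)} = ⊤ :=
  closure_eq_top_of_mem i (by simp) (by simp) (Subgroup.subset_closure (by simp))

lemma closure_of_t_of_s (i : Fin (g-1)) (hodd : Odd g) :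
    Subgroup.closure {of (t i), of (s g)} = ⊤ :=
  closure_eq_top_of_mem i (by simp) (by simp) (of_ρ_eq_one_of_odd i hodd ▸ one_mem _)

lemma nonempty_mulEquiv_of_odd (hg : 2 ≤ g) (hodd : Odd g) :
    Nonempty (Abelianization (GC g) ≃* Multiplicative (ZMod 2 × ZMod 2)) := by
  let i : Fin (g-1) := ⟨0, by omega⟩
  let φ : Abelianization (GC g) →* Multiplicative (ZMod 2 × ZMod 2) :=
    abLift (x := .ofAdd (1, 0)) (y := .ofAdd (0, 1)) (z := 1) (by decide) (by decide) (by decide)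
      fun _ => rfl
  let ψ : Multiplicative (ZMod 2 × ZMod 2) →* Abelianization (GC g) :=
    AddMonoidHom.toMultiplicativeLeft
      ((zmodTwoHom _ (of_t_sq i)).coprod (zmodTwoHom _ of_s_sq))
  refine ⟨φ.toMulEquiv ψ ?_ ?_⟩
  · refine MonoidHom.eq_of_eqOn_dense (closure_of_t_of_s i hodd) ?_
    rintro _ (rfl | rfl) <;> simp [φ, ψ]
  · refine MonoidHom.eq_of_eqOn_dense closure_ofAdd_zmod_two_prod ?_
    rintro _ (rfl | rfl) <;> simp [φ, ψ]

lemma nonempty_mulEquiv_of_even (hg : 2 ≤ g) (heven : Even g) :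
    Nonempty (Abelianization (GC g) ≃* Multiplicative (ZMod 2 × ZMod 2 × ZMod 2)) := by
  let i : Fin (g-1) := ⟨0, by omega⟩
  let φ : Abelianization (GC g) →* Multiplicative (ZMod 2 × ZMod 2 × ZMod 2) :=
    abLift (x := .ofAdd (1, 0, 0)) (y := .ofAdd (0, 1, 0)) (z := .ofAdd (0, 0, 1))
      (by decide) (by decide) (by decide) fun hodd => absurd heven (Nat.not_even_iff_odd.2 hodd)
  let ψ : Multiplicative (ZMod 2 × ZMod 2 × ZMod 2) →* Abelianization (GC g) :=
    AddMonoidHom.toMultiplicativeLeft ((zmodTwoHom _ (of_t_sq i)).coprod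
      ((zmodTwoHom _ of_s_sq).coprod (zmodTwoHom _ of_ρ_sq)))
  refine ⟨φ.toMulEquiv ψ ?_ ?_⟩
  · refine MonoidHom.eq_of_eqOn_dense (closure_of_t_of_s_of_ρ i) ?_
    rintro _ (rfl | rfl | rfl) <;> simp [φ, ψ]
  · refine MonoidHom.eq_of_eqOn_dense closure_ofAdd_zmod_two_prod_three ?_
    rintro _ (rfl | rfl | rfl) <;> simp [φ, ψ]

end GC

/-- `H_1(M^h(N_g)) = ℤ/2 ⊕ ℤ/2` for `g` odd and `ℤ/2 ⊕ ℤ/2 ⊕ ℤ/2` for `g` even;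
generated by (the images of) `t_1, s`, resp. `t_1, s, ρ`. -/
theorem stmt3 (g : ℕ) (hg : 3 ≤ g) :
    (Odd g →
      Nonempty (Abelianization (GC g) ≃* Multiplicative (ZMod 2 × ZMod 2)) ∧
      Subgroup.closure
        {Abelianization.of (GC.t (⟨0, by omega⟩ : Fin (g-1))),
         Abelianization.of (GC.s g)} = ⊤) ∧
    (Even g →
      Nonempty (Abelianization (GC g) ≃* Multiplicative (ZMod 2 × ZMod 2 × ZMod 2)) ∧
      Subgroup.closure
        {Abelianization.of (GC.t (⟨0, by omega⟩ : Fin (g-1))),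
         Abelianization.of (GC.s g),
         Abelianization.of (GC.ρ g)} = ⊤) :=
  ⟨fun hodd => ⟨GC.nonempty_mulEquiv_of_odd (by omega) hodd, GC.closure_of_t_of_s _ hodd⟩,
    fun heven =>
      ⟨GC.nonempty_mulEquiv_of_even (by omega) heven, GC.closure_of_t_of_s_of_ρ _⟩⟩
end

section
/- Let D be the presented group with generators t_1, t_2, s and defining relations: (D1) t_1t_2t_1 = t_2t_1t_2; (D2) (t_1t_2t_1)^4 = 1; (D3) s² = 1; (D4) s t_j s = t_j^{−1} for j = 1,2. Then the homomorphism G_C(3) → D determined by t_1 ↦ t_1, t_2 ↦ t_2, s ↦ s and ρ ↦ (t_1t_2t_1)² is a well-defined group isomorphism. -/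
open FreeGroup in
/-- The Birman–Chillingworth relations (C2)-(C8) for `g = 3`. The generator `Sum.inl i` is
`t_{i+1}` (`i : Fin 2`), `Sum.inr false` is `s` and `Sum.inr true` is `ρ`. -/
def relsC3 : Set (FreeGroup (Fin 2 ⊕ Bool)) :=
  -- (C2)  t₁t₂t₁ = t₂t₁t₂
  { of (Sum.inl 0 : Fin 2 ⊕ Bool) * of (.inl 1) * of (.inl 0) *
      (of (.inl 1) * of (.inl 0) * of (.inl 1))⁻¹,
  -- (C3)  (t₁t₂)³ = ρ
    (of (Sum.inl 0 : Fin 2 ⊕ Bool) * of (.inl 1)) ^ 3 * (of (.inr true))⁻¹,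
  -- (C4)  s² = 1
    of (Sum.inr false : Fin 2 ⊕ Bool) ^ 2,
  -- (C5)  s t₁ s = t₁⁻¹
    of (Sum.inr false : Fin 2 ⊕ Bool) * of (.inl 0) * of (.inr false) * of (.inl 0),
  -- (C5)  s t₂ s = t₂⁻¹
    of (Sum.inr false : Fin 2 ⊕ Bool) * of (.inl 1) * of (.inr false) * of (.inl 1),
  -- (C6)  ρ² = 1
    of (Sum.inr true : Fin 2 ⊕ Bool) ^ 2,
  -- (C7)  ρ t₁ ρ = t₁
    of (Sum.inr true : Fin 2 ⊕ Bool) * of (.inl 0) * of (.inr true) * (of (.inl 0))⁻¹,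
  -- (C7)  ρ t₂ ρ = t₂
    of (Sum.inr true : Fin 2 ⊕ Bool) * of (.inl 1) * of (.inr true) * (of (.inl 1))⁻¹,
  -- (C8)  ρ s ρ = s
    of (Sum.inr true : Fin 2 ⊕ Bool) * of (.inr false) * of (.inr true) *
      (of (.inr false))⁻¹ }

/-- `G_C(3)`. -/
def GC3 : Type := PresentedGroup relsC3

instance : Group GC3 := by unfold GC3; infer_instance

def GC3.t (i : Fin 2) : GC3 := PresentedGroup.of (rels := relsC3) (Sum.inl i)
def GC3.s : GC3 := PresentedGroup.of (rels := relsC3) (Sum.inr false)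
def GC3.ρ : GC3 := PresentedGroup.of (rels := relsC3) (Sum.inr true)

open FreeGroup in
/-- Relations (D1)-(D4). The generator `some i` is `t_{i+1}` (`i : Fin 2`), `none` is `s`. -/
def relsD : Set (FreeGroup (Option (Fin 2))) :=
  -- (D1)  t₁t₂t₁ = t₂t₁t₂
  { of (some 0 : Option (Fin 2)) * of (some 1) * of (some 0) *
      (of (some 1) * of (some 0) * of (some 1))⁻¹,
  -- (D2)  (t₁t₂t₁)⁴ = 1
    (of (some 0 : Option (Fin 2)) * of (some 1) * of (some 0)) ^ 4,
  -- (D3)  s² = 1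
    of (none : Option (Fin 2)) ^ 2,
  -- (D4)  s t₁ s = t₁⁻¹
    of (none : Option (Fin 2)) * of (some 0) * of none * of (some 0),
  -- (D4)  s t₂ s = t₂⁻¹
    of (none : Option (Fin 2)) * of (some 1) * of none * of (some 1) }

/-- The group `D` of the Birman–Chillingworth presentation of `M(N_3)`. -/
def D : Type := PresentedGroup relsD

instance : Group D := by unfold D; infer_instance

def D.t (i : Fin 2) : D := PresentedGroup.of (rels := relsD) (some i)
def D.s : D := PresentedGroup.of (rels := relsD) none


section Aux

lemma relOne {α : Type*} {rels : Set (FreeGroup α)} {r : FreeGroup α} (h : r ∈ rels) :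
    PresentedGroup.mk rels r = 1 :=
  (QuotientGroup.eq_one_iff r).mpr (Subgroup.subset_normalClosure h)

local notation "Δ" => (D.t 0 * D.t 1 * D.t 0)

-- relations in D
lemma D.braid : D.t 0 * D.t 1 * D.t 0 = D.t 1 * D.t 0 * D.t 1 := by
  have h := relOne (rels := relsD) (r := FreeGroup.of (some 0) * FreeGroup.of (some 1) *
    FreeGroup.of (some 0) * (FreeGroup.of (some 1) * FreeGroup.of (some 0) *
    FreeGroup.of (some 1))⁻¹) (by simp [relsD])
  simp only [map_mul, map_inv, mul_inv_eq_one] at h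
  exact h

lemma D.delta4 : Δ ^ 4 = 1 := by
  have h := relOne (rels := relsD) (r := (FreeGroup.of (some 0) * FreeGroup.of (some 1) *
    FreeGroup.of (some 0)) ^ 4) (by simp [relsD])
  simp only [map_pow, map_mul] at h
  exact h

lemma D.s2 : D.s * D.s = 1 := by
  have h := relOne (rels := relsD) (r := FreeGroup.of (none : Option (Fin 2)) ^ 2)
    (by simp [relsD])
  simp only [map_pow, pow_two] at h
  exact h

lemma D.sts0 : D.s * D.t 0 * D.s * D.t 0 = 1 := by
  have h := relOne (rels := relsD) (r := FreeGroup.of (none : Option (Fin 2)) *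
    FreeGroup.of (some 0) * FreeGroup.of none * FreeGroup.of (some 0)) (by simp [relsD])
  simp only [map_mul] at h
  exact h

lemma D.sts1 : D.s * D.t 1 * D.s * D.t 1 = 1 := by
  have h := relOne (rels := relsD) (r := FreeGroup.of (none : Option (Fin 2)) *
    FreeGroup.of (some 1) * FreeGroup.of none * FreeGroup.of (some 1)) (by simp [relsD])
  simp only [map_mul] at h
  exact h

-- relations in GC3
lemma GC3.braid : GC3.t 0 * GC3.t 1 * GC3.t 0 = GC3.t 1 * GC3.t 0 * GC3.t 1 := by
  have h := relOne (rels := relsC3) (r := FreeGroup.of (Sum.inl 0 : Fin 2 ⊕ Bool) *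
    FreeGroup.of (.inl 1) * FreeGroup.of (.inl 0) * (FreeGroup.of (.inl 1) *
    FreeGroup.of (.inl 0) * FreeGroup.of (.inl 1))⁻¹) (by simp [relsC3])
  simp only [map_mul, map_inv, mul_inv_eq_one] at h
  exact h

lemma GC3.rhoDef : (GC3.t 0 * GC3.t 1) ^ 3 = GC3.ρ := by
  have h := relOne (rels := relsC3) (r := (FreeGroup.of (Sum.inl 0 : Fin 2 ⊕ Bool) *
    FreeGroup.of (.inl 1)) ^ 3 * (FreeGroup.of (.inr true))⁻¹) (by simp [relsC3])
  simp only [map_mul, map_inv, map_pow, mul_inv_eq_one] at h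
  exact h

lemma GC3.s2 : GC3.s * GC3.s = 1 := by
  have h := relOne (rels := relsC3) (r := FreeGroup.of (Sum.inr false : Fin 2 ⊕ Bool) ^ 2)
    (by simp [relsC3])
  simp only [map_pow, pow_two] at h
  exact h

lemma GC3.sts0 : GC3.s * GC3.t 0 * GC3.s * GC3.t 0 = 1 := by
  have h := relOne (rels := relsC3) (r := FreeGroup.of (Sum.inr false : Fin 2 ⊕ Bool) *
    FreeGroup.of (.inl 0) * FreeGroup.of (.inr false) * FreeGroup.of (.inl 0)) (by simp [relsC3])
  simp only [map_mul] at h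
  exact h

lemma GC3.sts1 : GC3.s * GC3.t 1 * GC3.s * GC3.t 1 = 1 := by
  have h := relOne (rels := relsC3) (r := FreeGroup.of (Sum.inr false : Fin 2 ⊕ Bool) *
    FreeGroup.of (.inl 1) * FreeGroup.of (.inr false) * FreeGroup.of (.inl 1)) (by simp [relsC3])
  simp only [map_mul] at h
  exact h

lemma GC3.rho2 : GC3.ρ * GC3.ρ = 1 := by
  have h := relOne (rels := relsC3) (r := FreeGroup.of (Sum.inr true : Fin 2 ⊕ Bool) ^ 2)
    (by simp [relsC3])
  simp only [map_pow, pow_two] at h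
  exact h

-- derived facts in D
lemma D.delta_t0 : Δ * D.t 0 = D.t 1 * Δ := by
  conv_lhs => rw [D.braid]
  group

lemma D.delta_t1 : Δ * D.t 1 = D.t 0 * Δ := by
  conv_rhs => rw [D.braid]
  group

lemma D.dcomm0 : Δ ^ 2 * D.t 0 = D.t 0 * Δ ^ 2 := by
  rw [pow_two, mul_assoc, D.delta_t0, ← mul_assoc, D.delta_t1, mul_assoc]

lemma D.dcomm1 : Δ ^ 2 * D.t 1 = D.t 1 * Δ ^ 2 := by
  rw [pow_two, mul_assoc, D.delta_t1, ← mul_assoc, D.delta_t0, mul_assoc]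

lemma D.dcomm : ∀ i : Fin 2, Δ ^ 2 * D.t i = D.t i * Δ ^ 2 := by
  intro i
  fin_cases i
  · exact D.dcomm0
  · exact D.dcomm1

lemma D.dd : Δ ^ 2 * Δ ^ 2 = 1 := by
  rw [← pow_add]
  exact D.delta4

lemma D.s_inv : D.s⁻¹ = D.s := by
  rw [inv_eq_iff_mul_eq_one]; exact D.s2

lemma D.sts (i : Fin 2) : D.s * D.t i * D.s = (D.t i)⁻¹ := by
  fin_cases i
  · rw [eq_inv_iff_mul_eq_one]; exact D.sts0
  · rw [eq_inv_iff_mul_eq_one]; exact D.sts1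

lemma D.s_swap (i : Fin 2) : D.s * D.t i = (D.t i)⁻¹ * D.s := by
  calc D.s * D.t i = D.s * D.t i * (D.s * D.s) := by rw [D.s2, mul_one]
    _ = (D.s * D.t i * D.s) * D.s := by group
    _ = (D.t i)⁻¹ * D.s := by rw [D.sts]

lemma D.s_swap' (i : Fin 2) (x : D) : D.s * (D.t i * x) = (D.t i)⁻¹ * (D.s * x) := by
  rw [← mul_assoc, D.s_swap, mul_assoc]

lemma D.sdeltas : D.s * Δ * D.s = Δ⁻¹ := by
  simp only [mul_assoc]
  rw [D.s_swap' 0, D.s_swap' 1, D.s_swap' 0, D.s2]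
  group

lemma D.sds : D.s * Δ ^ 2 * D.s = (Δ ^ 2)⁻¹ := by
  rw [pow_two]
  have e : (D.s * Δ * D.s) * (D.s * Δ * D.s) = D.s * (Δ * ((D.s * D.s) * Δ)) * D.s := by group
  rw [D.s2, one_mul] at e
  calc D.s * (Δ * Δ) * D.s = (D.s * Δ * D.s) * (D.s * Δ * D.s) := e.symm
    _ = Δ⁻¹ * Δ⁻¹ := by rw [D.sdeltas]
    _ = (Δ * Δ)⁻¹ := by group

lemma D.tri : (D.t 0 * D.t 1) ^ 3 = Δ ^ 2 := by
  rw [pow_two]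
  nth_rewrite 2 [D.braid]
  rw [show (3 : ℕ) = 2 + 1 from rfl, pow_add, pow_two, pow_one]
  group

-- derived facts in GC3
lemma GC3.delta2_eq_rho : (GC3.t 0 * GC3.t 1 * GC3.t 0) ^ 2 = GC3.ρ := by
  rw [← GC3.rhoDef, pow_two]
  nth_rewrite 2 [GC3.braid]
  rw [show (3 : ℕ) = 2 + 1 from rfl, pow_add, pow_two, pow_one]
  group

lemma GC3.delta4 : (GC3.t 0 * GC3.t 1 * GC3.t 0) ^ 4 = 1 := by
  rw [show (4 : ℕ) = 2 * 2 from rfl, pow_mul, GC3.delta2_eq_rho, pow_two]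
  exact GC3.rho2

-- the two homomorphisms
def fCD : Fin 2 ⊕ Bool → D := fun x =>
  match x with
  | .inl i => D.t i
  | .inr false => D.s
  | .inr true => Δ ^ 2

def fDC : Option (Fin 2) → GC3 := fun x =>
  match x with
  | none => GC3.s
  | some i => GC3.t i

lemma hfCD : ∀ r ∈ relsC3, FreeGroup.lift fCD r = 1 := by
  intro r hr
  simp only [relsC3, Set.mem_insert_iff, Set.mem_singleton_iff] at hr
  rcases hr with rfl | rfl | rfl | rfl | rfl | rfl | rfl | rfl | rfl <;>
    simp only [map_mul, map_inv, map_pow, FreeGroup.lift_apply_of, fCD]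
  · rw [mul_inv_eq_one]; exact D.braid
  · rw [mul_inv_eq_one]; exact D.tri
  · rw [pow_two]; exact D.s2
  · exact D.sts0
  · exact D.sts1
  · rw [pow_two]; exact D.dd
  · rw [mul_inv_eq_one, D.dcomm 0, mul_assoc, D.dd, mul_one]
  · rw [mul_inv_eq_one, D.dcomm 1, mul_assoc, D.dd, mul_one]
  · rw [D.s_inv]
    have h1 := D.sds
    generalize Δ ^ 2 = d at h1 ⊢
    calc d * D.s * d * D.s = d * (D.s * d * D.s) := by group
      _ = d * d⁻¹ := by rw [h1]
      _ = 1 := by group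

lemma hfDC : ∀ r ∈ relsD, FreeGroup.lift fDC r = 1 := by
  intro r hr
  simp only [relsD, Set.mem_insert_iff, Set.mem_singleton_iff] at hr
  rcases hr with rfl | rfl | rfl | rfl | rfl <;>
    simp only [map_mul, map_inv, map_pow, FreeGroup.lift_apply_of, fDC]
  · rw [mul_inv_eq_one]; exact GC3.braid
  · exact GC3.delta4
  · rw [pow_two]; exact GC3.s2
  · exact GC3.sts0
  · exact GC3.sts1

def phi : GC3 →* D := PresentedGroup.toGroup hfCD
def psi : D →* GC3 := PresentedGroup.toGroup hfDC

lemma phi_t (i : Fin 2) : phi (GC3.t i) = D.t i := PresentedGroup.toGroup.of hfCD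
lemma phi_s : phi GC3.s = D.s := PresentedGroup.toGroup.of hfCD
lemma phi_rho : phi GC3.ρ = Δ ^ 2 := PresentedGroup.toGroup.of hfCD
lemma psi_t (i : Fin 2) : psi (D.t i) = GC3.t i := PresentedGroup.toGroup.of hfDC
lemma psi_s : psi D.s = GC3.s := PresentedGroup.toGroup.of hfDC

lemma psi_phi : psi.comp phi = MonoidHom.id GC3 := by
  apply PresentedGroup.ext (rels := relsC3)
  rintro (i | b)
  · show psi (phi (GC3.t i)) = GC3.t i
    rw [phi_t, psi_t]
  · cases b
    · show psi (phi GC3.s) = GC3.s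
      rw [phi_s, psi_s]
    · show psi (phi GC3.ρ) = GC3.ρ
      rw [phi_rho, map_pow, map_mul, map_mul, psi_t, psi_t]
      exact GC3.delta2_eq_rho

lemma phi_psi : phi.comp psi = MonoidHom.id D := by
  apply PresentedGroup.ext (rels := relsD)
  rintro (_ | i)
  · show phi (psi D.s) = D.s
    rw [psi_s, phi_s]
  · show phi (psi (D.t i)) = D.t i
    rw [psi_t, phi_t]

end Aux

/-- The homomorphism `G_C(3) → D` given by `t₁ ↦ t₁`, `t₂ ↦ t₂`, `s ↦ s`,
`ρ ↦ (t₁t₂t₁)²` is a well-defined isomorphism. -/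
theorem stmt5 :
    ∃ e : GC3 ≃* D,
      (∀ i : Fin 2, e (GC3.t i) = D.t i) ∧
      e GC3.s = D.s ∧
      e GC3.ρ = (D.t 0 * D.t 1 * D.t 0) ^ 2 := by
  exact ⟨MonoidHom.toMulEquiv phi psi psi_phi phi_psi, fun i => phi_t i, phi_s, phi_rho⟩
end

section
/- For g ≥ 3, the maps T_1,…,T_{g−1}, S, R are well-defined automorphisms of the abelian group M(g) (i.e., the given formulas on γ_1,…,γ_g respect the relation 2(γ_1+⋯+γ_g) = 0 and define invertible endomorphisms), and there exists a group homomorphism ψ : G_C(g) → Aut(M(g)) with ψ(t_i) = T_i for i = 1,…,g−1, ψ(s) = S and ψ(ρ) = R; that is, the automorphisms T_i, S, R satisfy all the defining relations (C1)–(C8). -/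
/-- `M(g) = ℤ^g / ⟨2(e₁ + ⋯ + e_g)⟩`, i.e. `H_1(N_g; ℤ)`. -/
def MN (g : ℕ) : Type :=
  (Fin g → ℤ) ⧸ AddSubgroup.zmultiples (fun _ => (2 : ℤ) : Fin g → ℤ)

instance (g : ℕ) : AddCommGroup (MN g) := by unfold MN; infer_instance

/-- `γ_i`, the class of `e_i` in `M(g)` (`i` is a 0-based index). -/
def γ {g : ℕ} (i : Fin g) : MN g :=
  QuotientAddGroup.mk (Pi.single i 1)

/-- The inclusion `Fin (g-1) → Fin g`. -/
def idx {g : ℕ} (i : Fin (g-1)) : Fin g := ⟨i, by have := i.isLt; omega⟩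

/-- The successor map `Fin (g-1) → Fin g`, `i ↦ i+1`. -/
def idx1 {g : ℕ} (i : Fin (g-1)) : Fin g := ⟨(i : ℕ) + 1, by have := i.isLt; omega⟩

/-- The formulas defining the automorphisms `T_i` on the generators `γ_j` of `M(g)`. -/
def IsT {g : ℕ} (T : Fin (g-1) → AddAut (MN g)) : Prop :=
  ∀ i : Fin (g-1),
    T i (γ (idx i)) = - γ (idx1 i) ∧
    T i (γ (idx1 i)) = γ (idx i) + (2 : ℤ) • γ (idx1 i) ∧
    ∀ j : Fin g, j ≠ idx i → j ≠ idx1 i → T i (γ j) = γ j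

/-- The formula defining the automorphism `S` on the generators `γ_j` of `M(g)`
(with 1-based index `j`, `S(γ_j) = (-1)^j (2γ_1 + ⋯ + 2γ_{j-1} + γ_j)`). -/
def IsS {g : ℕ} (S : AddAut (MN g)) : Prop :=
  ∀ j : Fin g,
    S (γ j) = (-1 : ℤ) ^ ((j : ℕ) + 1) • ((2 : ℤ) • (∑ k ∈ Finset.Iio j, γ k) + γ j)

/-!
Every map in the statement is induced by a `ℤ`-linear automorphism of `ℤ^g` that sends
`u = 2(e_1 + ⋯ + e_g)` to `±u`, and these automorphisms form a group mapping homomorphically to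
`Aut(M(g))`; so all relations except (C3) may be checked on `ℤ^g`. Relations (C1), (C2) are
coordinate identities. In the basis of partial sums `σ_n = e_1 + ⋯ + e_n` the map `S` is
diagonal with entries `(-1)^n`, and `T_i` fixes every `σ_n` except
`σ_i ↦ σ_{i-1} + σ_i - σ_{i+1}`; this gives (C4) and (C5). Relation (C3) holds only in `M(g)`:
`t_1 ⋯ t_{g-1}` sends `γ_j ↦ -γ_{j+1}` for `j < g` and `γ_g ↦ γ_1 + 2(γ_2 + ⋯ + γ_g) = -γ_1`,
so it is minus a cyclic permutation of the generators and its `g`-th power is `(-1)^g`.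
-/

open scoped Pointwise

namespace MN

variable {g : ℕ}

-- `stdVec g j` is `e_{j+1}` for `j < g` and `0` otherwise; indexing by `ℕ` avoids casts
-- between `Fin g` and `Fin (g - 1)`.
def stdVec (g j : ℕ) : Fin g → ℤ := fun m => if (m : ℕ) = j then 1 else 0

def partialSum (g n : ℕ) : Fin g → ℤ := fun m => if (m : ℕ) < n then 1 else 0

theorem stdVec_eq_single (j : Fin g) : stdVec g j = Pi.single j 1 := by
  funext m
  simp [stdVec, Pi.single_apply, Fin.ext_iff]

theorem partialSum_zero : partialSum g 0 = 0 := by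
  funext m
  simp [partialSum]

theorem partialSum_succ (n : ℕ) : partialSum g (n + 1) = partialSum g n + stdVec g n := by
  funext m
  simp only [partialSum, stdVec, Pi.add_apply]
  split_ifs <;> omega

theorem twos_eq_partialSum : (fun _ => 2 : Fin g → ℤ) = (2 : ℤ) • partialSum g g := by
  funext m
  simp [partialSum]

theorem idx_ne_idx1 (i : Fin (g - 1)) : idx i ≠ idx1 i := by
  simp [idx, idx1, Fin.ext_iff]

def liftT (i : Fin (g - 1)) : (Fin g → ℤ) ≃ₗ[ℤ] (Fin g → ℤ) where
  toFun x k :=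
    if k = idx i then x (idx1 i) else if k = idx1 i then -x (idx i) + 2 * x (idx1 i) else x k
  invFun x k :=
    if k = idx i then 2 * x (idx i) - x (idx1 i) else if k = idx1 i then x (idx i) else x k
  map_add' x y := by
    funext k
    simp only [Pi.add_apply]
    split_ifs <;> ring
  map_smul' c x := by
    funext k
    simp only [Pi.smul_apply, smul_eq_mul, RingHom.id_apply]
    split_ifs <;> ring
  left_inv x := by
    funext k
    simp only [idx_ne_idx1, (idx_ne_idx1 i).symm, if_true, if_false]
    split_ifs <;> subst_vars <;> ring
  right_inv x := by
    funext k
    simp only [idx_ne_idx1, (idx_ne_idx1 i).symm, if_true, if_false]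
    split_ifs <;> subst_vars <;> ring

theorem liftT_apply (i : Fin (g - 1)) (x : Fin g → ℤ) (k : Fin g) :
    liftT i x k =
      if k = idx i then x (idx1 i) else if k = idx1 i then -x (idx i) + 2 * x (idx1 i) else x k :=
  rfl

theorem liftT_stdVec_self (i : Fin (g - 1)) : liftT i (stdVec g i) = -stdVec g (i + 1) := by
  funext k
  simp only [liftT_apply, stdVec, Pi.neg_apply, Fin.ext_iff, idx, idx1]
  split_ifs <;> omega

theorem liftT_stdVec_succ (i : Fin (g - 1)) :
    liftT i (stdVec g (i + 1)) = stdVec g i + (2 : ℤ) • stdVec g (i + 1) := by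
  funext k
  simp only [liftT_apply, stdVec, Pi.add_apply, Pi.smul_apply, smul_eq_mul, Fin.ext_iff, idx,
    idx1]
  split_ifs <;> omega

theorem liftT_stdVec_of_ne (i : Fin (g - 1)) {j : ℕ} (h₁ : j ≠ i) (h₂ : j ≠ i + 1) :
    liftT i (stdVec g j) = stdVec g j := by
  funext k
  simp only [liftT_apply, stdVec, Fin.ext_iff, idx, idx1]
  split_ifs <;> omega

theorem liftT_apply_of_eq (i : Fin (g - 1)) {x : Fin g → ℤ} (h : x (idx i) = x (idx1 i)) :
    liftT i x = x := by
  funext k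
  rw [liftT_apply]
  split_ifs with h₁ h₂
  · rw [h₁, h]
  · rw [h₂, h]; ring
  · rfl

theorem liftT_partialSum_of_ne (i : Fin (g - 1)) {n : ℕ} (h : n ≠ i + 1) :
    liftT i (partialSum g n) = partialSum g n := by
  apply liftT_apply_of_eq
  simp only [partialSum, idx, idx1]
  split_ifs <;> omega

theorem liftT_partialSum_succ (i : Fin (g - 1)) :
    liftT i (partialSum g (i + 1)) =
      partialSum g i + partialSum g (i + 1) - partialSum g (i + 2) := by
  funext k
  simp only [liftT_apply, partialSum, Pi.add_apply, Pi.sub_apply, Fin.ext_iff, idx, idx1]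
  split_ifs <;> omega

theorem liftT_twos (i : Fin (g - 1)) : liftT i (fun _ => 2) = fun _ => 2 :=
  liftT_apply_of_eq i rfl

theorem liftT_commute {j k : Fin (g - 1)} (h : (j : ℕ) + 1 < k ∨ (k : ℕ) + 1 < j) :
    liftT k * liftT j = liftT j * liftT k := by
  ext x m
  simp only [LinearEquiv.mul_apply, liftT_apply, Fin.ext_iff, idx, idx1]
  split_ifs <;> first | rfl | omega

theorem liftT_braid {j k : Fin (g - 1)} (h : (j : ℕ) + 1 = k) :
    liftT j * liftT k * liftT j = liftT k * liftT j * liftT k := by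
  have e : idx1 j = idx k := by simp [idx, idx1, h]
  have n₁ : idx j ≠ idx k := by simp [idx, Fin.ext_iff]; omega
  have n₂ : idx j ≠ idx1 k := by simp [idx, idx1, Fin.ext_iff]; omega
  have n₃ := idx_ne_idx1 k
  ext x m
  simp only [LinearEquiv.mul_apply, liftT_apply, e]
  by_cases c₁ : m = idx j <;> by_cases c₂ : m = idx k <;> by_cases c₃ : m = idx1 k <;>
    simp_all [n₁.symm, n₂.symm, n₃.symm]
  ring

theorem neg_one_pow_smul_neg_one_pow_smul {M : Type*} [AddCommGroup M] (n : ℕ) (x : M) :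
    (-1 : ℤ) ^ n • (-1 : ℤ) ^ n • x = x := by
  rw [smul_smul, ← mul_pow, neg_one_mul, neg_neg, one_pow, one_smul]

theorem linearMap_ext_partialSum {M : Type*} [AddCommGroup M]
    {f h : (Fin g → ℤ) →ₗ[ℤ] M} (H : ∀ n ≤ g, f (partialSum g n) = h (partialSum g n)) :
    f = h := by
  refine (Pi.basisFun ℤ (Fin g)).ext fun j => ?_
  have hj := j.isLt
  rw [Pi.basisFun_apply, ← stdVec_eq_single,
    show stdVec g j = partialSum g (j + 1) - partialSum g j by rw [partialSum_succ]; abel,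
    map_sub, map_sub, H _ hj, H _ hj.le]

theorem linearEquiv_ext_partialSum {f h : (Fin g → ℤ) ≃ₗ[ℤ] (Fin g → ℤ)}
    (H : ∀ n ≤ g, f (partialSum g n) = h (partialSum g n)) : f = h :=
  LinearEquiv.toLinearMap_injective (linearMap_ext_partialSum H)

noncomputable def liftSLinear (g : ℕ) : (Fin g → ℤ) →ₗ[ℤ] (Fin g → ℤ) :=
  (Pi.basisFun ℤ (Fin g)).constr ℤ fun j =>
    (-1 : ℤ) ^ ((j : ℕ) + 1) • ((2 : ℤ) • partialSum g j + stdVec g j)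

theorem liftSLinear_stdVec {j : ℕ} (hj : j < g) :
    liftSLinear g (stdVec g j) =
      (-1 : ℤ) ^ (j + 1) • ((2 : ℤ) • partialSum g j + stdVec g j) := by
  have key := (Pi.basisFun ℤ (Fin g)).constr_basis ℤ
    (fun j : Fin g => (-1 : ℤ) ^ ((j : ℕ) + 1) • ((2 : ℤ) • partialSum g j + stdVec g j))
    ⟨j, hj⟩
  rwa [Pi.basisFun_apply, ← stdVec_eq_single] at key

theorem liftSLinear_partialSum {n : ℕ} (hn : n ≤ g) :
    liftSLinear g (partialSum g n) = (-1 : ℤ) ^ n • partialSum g n := by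
  induction n with
  | zero => simp [partialSum_zero]
  | succ n ih =>
    rw [partialSum_succ, map_add, ih (by omega), liftSLinear_stdVec (by omega)]
    match_scalars <;> ring

theorem liftSLinear_involutive : Function.Involutive (liftSLinear g) := by
  refine LinearMap.congr_fun (f := liftSLinear g ∘ₗ liftSLinear g) (g := LinearMap.id)
    (linearMap_ext_partialSum fun n hn => ?_)
  rw [LinearMap.comp_apply, liftSLinear_partialSum hn, map_zsmul, liftSLinear_partialSum hn,
    neg_one_pow_smul_neg_one_pow_smul, LinearMap.id_apply]

noncomputable def liftS (g : ℕ) : (Fin g → ℤ) ≃ₗ[ℤ] (Fin g → ℤ) :=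
  LinearEquiv.ofInvolutive (liftSLinear g) liftSLinear_involutive

theorem liftS_apply (x : Fin g → ℤ) : liftS g x = liftSLinear g x := rfl

theorem liftS_mul_self : liftS g * liftS g = 1 := by
  ext x : 1
  exact liftSLinear_involutive x

theorem liftS_twos : liftS g (fun _ => 2) = (-1 : ℤ) ^ g • fun _ => 2 := by
  rw [twos_eq_partialSum, map_zsmul, liftS_apply, liftSLinear_partialSum le_rfl, smul_comm]

theorem liftS_mul_liftT_mul_liftS_mul_liftT (i : Fin (g - 1)) :
    liftS g * liftT i * liftS g * liftT i = 1 := by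
  have hi := i.isLt
  refine linearEquiv_ext_partialSum fun n hn => ?_
  simp only [LinearEquiv.mul_apply, LinearEquiv.coe_one, id_eq, liftS_apply]
  by_cases hni : n = i + 1
  · subst hni
    rw [liftT_partialSum_succ]
    simp only [map_add, map_sub, map_zsmul, liftSLinear_partialSum (show i ≤ g by omega),
      liftSLinear_partialSum (show (i : ℕ) + 1 ≤ g by omega),
      liftSLinear_partialSum (show (i : ℕ) + 2 ≤ g by omega),
      liftT_partialSum_of_ne i (show (i : ℕ) ≠ i + 1 by omega),
      liftT_partialSum_of_ne i (show (i : ℕ) + 2 ≠ i + 1 by omega), liftT_partialSum_succ]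
    match_scalars <;> ring_nf
    simp [pow_mul']
  · rw [liftT_partialSum_of_ne i hni, liftSLinear_partialSum hn, map_zsmul,
      liftT_partialSum_of_ne i hni, map_zsmul, liftSLinear_partialSum hn,
      neg_one_pow_smul_neg_one_pow_smul]

abbrev relLattice (g : ℕ) : AddSubgroup (Fin g → ℤ) := AddSubgroup.zmultiples fun _ => 2

abbrev latticeStab (g : ℕ) : Subgroup ((Fin g → ℤ) ≃ₗ[ℤ] (Fin g → ℤ)) :=
  MulAction.stabilizer _ (relLattice g)

theorem relLattice_map (e : latticeStab g) :
    (relLattice g).map (e.1.toAddEquiv : (Fin g → ℤ) →+ (Fin g → ℤ)) = relLattice g :=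
  MulAction.mem_stabilizer_iff.mp e.2

theorem mem_latticeStab_of_apply_twos {e : (Fin g → ℤ) ≃ₗ[ℤ] (Fin g → ℤ)}
    (h : e (fun _ => 2) = (fun _ => 2) ∨ e (fun _ => 2) = -fun _ => 2) : e ∈ latticeStab g := by
  refine MulAction.mem_stabilizer_iff.mpr
    ((AddMonoidHom.map_zmultiples (e.toAddEquiv : (Fin g → ℤ) →+ (Fin g → ℤ)) _).trans ?_)
  rcases h with h | h
  · exact congrArg _ h
  · exact (congrArg AddSubgroup.zmultiples h).trans AddSubgroup.zmultiples_neg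

noncomputable def descend : latticeStab g →* Multiplicative (AddAut (MN g)) where
  toFun e := .ofAdd (QuotientAddGroup.congr _ _ e.1.toAddEquiv (relLattice_map e))
  map_one' := by
    ext x
    induction x using QuotientAddGroup.induction_on
    rfl
  map_mul' e f := by
    ext x
    induction x using QuotientAddGroup.induction_on
    rfl

def mk (g : ℕ) : (Fin g → ℤ) →+ MN g := QuotientAddGroup.mk' (relLattice g)

theorem descend_mk (e : latticeStab g) (x : Fin g → ℤ) :
    Multiplicative.toAdd (descend e) (mk g x) = mk g (e.1 x) :=
  rfl

theorem mk_twos : mk g (fun _ => 2) = 0 :=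
  (QuotientAddGroup.eq_zero_iff _).mpr (AddSubgroup.mem_zmultiples _)

theorem γ_eq_mk (j : Fin g) : γ j = mk g (stdVec g j) := by
  rw [stdVec_eq_single]; rfl

theorem addAut_ext {e f : Multiplicative (AddAut (MN g))}
    (h : ∀ j, Multiplicative.toAdd e (γ j) = Multiplicative.toAdd f (γ j)) : e = f :=
  AddEquiv.toAddMonoidHom_injective <| QuotientAddGroup.addMonoidHom_ext _ <|
    AddMonoidHom.toIntLinearMap_injective <| (Pi.basisFun ℤ (Fin g)).ext fun j => by
      rw [Pi.basisFun_apply]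
      exact h j

def tStab (i : Fin (g - 1)) : latticeStab g :=
  ⟨liftT i, mem_latticeStab_of_apply_twos (.inl (liftT_twos i))⟩

noncomputable def sStab (g : ℕ) : latticeStab g :=
  ⟨liftS g, mem_latticeStab_of_apply_twos <| by
    rw [liftS_twos]
    rcases neg_one_pow_eq_or ℤ g with h | h <;> simp [h]⟩

def rStab (g : ℕ) : latticeStab g :=
  ⟨LinearEquiv.neg ℤ, mem_latticeStab_of_apply_twos (.inr rfl)⟩

theorem isT_descend_tStab : IsT fun i => Multiplicative.toAdd (descend (tStab (g := g) i)) := by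
  intro i
  refine ⟨?_, ?_, fun j h₁ h₂ => ?_⟩
  · simp only [γ_eq_mk, descend_mk, ← map_neg]
    exact congrArg _ (liftT_stdVec_self i)
  · simp only [γ_eq_mk, descend_mk, ← map_zsmul, ← map_add]
    exact congrArg _ (liftT_stdVec_succ i)
  · rw [γ_eq_mk, descend_mk]
    exact congrArg _ (liftT_stdVec_of_ne i (fun h => h₁ (Fin.ext h)) (fun h => h₂ (Fin.ext h)))

theorem sum_Iio_γ (j : Fin g) : ∑ k ∈ Finset.Iio j, γ k = mk g (partialSum g j) := by
  have h : partialSum g j = ∑ k ∈ Finset.Iio j, Pi.single k 1 := by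
    funext m
    simp [partialSum, Finset.sum_apply, Pi.single_apply]
  rw [h, map_sum]
  rfl

theorem isS_descend_sStab : IsS (Multiplicative.toAdd (descend (sStab g))) := by
  intro j
  rw [sum_Iio_γ, γ_eq_mk, descend_mk, ← map_zsmul, ← map_add, ← map_zsmul]
  exact congrArg _ (liftSLinear_stdVec j.isLt)

theorem descend_rStab_apply (x : MN g) : Multiplicative.toAdd (descend (rStab g)) x = -x := by
  induction x using QuotientAddGroup.induction_on
  rfl

noncomputable def coxeterPrefix (n : ℕ) (hn : n ≤ g - 1) : latticeStab g :=
  (List.ofFn fun k : Fin n => tStab (Fin.castLE hn k)).prod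

theorem coxeterPrefix_zero : coxeterPrefix (g := g) 0 (Nat.zero_le _) = 1 := rfl

theorem coxeterPrefix_succ {n : ℕ} (hn : n + 1 ≤ g - 1) :
    coxeterPrefix (n + 1) hn = coxeterPrefix n (by omega) * tStab ⟨n, by omega⟩ := by
  simp only [coxeterPrefix, List.ofFn_succ', List.prod_concat]
  rfl

theorem coxeterPrefix_stdVec_of_gt {n j : ℕ} (hn : n ≤ g - 1) (hj : n < j) :
    (coxeterPrefix n hn).1 (stdVec g j) = stdVec g j := by
  induction n with
  | zero => rfl
  | succ n ih =>
    rw [coxeterPrefix_succ]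
    change (coxeterPrefix n _).1 (liftT _ (stdVec g j)) = _
    rw [liftT_stdVec_of_ne _ (by simp; omega) (by simp; omega), ih _ (by omega)]

theorem coxeterPrefix_stdVec_of_lt {n j : ℕ} (hn : n ≤ g - 1) (hj : j < n) :
    (coxeterPrefix n hn).1 (stdVec g j) = -stdVec g (j + 1) := by
  induction n with
  | zero => omega
  | succ n ih =>
    rw [coxeterPrefix_succ]
    change (coxeterPrefix n _).1 (liftT _ (stdVec g j)) = _
    rcases Nat.lt_succ_iff_lt_or_eq.mp hj with hj | rfl
    · rw [liftT_stdVec_of_ne _ (by simp; omega) (by simp; omega), ih _ hj]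
    · rw [liftT_stdVec_self, map_neg, coxeterPrefix_stdVec_of_gt _ (by simp)]

theorem coxeterPrefix_stdVec_self {n : ℕ} (hn : n ≤ g - 1) :
    (coxeterPrefix n hn).1 (stdVec g n) = (2 : ℤ) • partialSum g (n + 1) - stdVec g 0 := by
  induction n with
  | zero =>
    rw [coxeterPrefix_zero, partialSum_succ, partialSum_zero]
    change stdVec g 0 = _
    abel
  | succ n ih =>
    rw [coxeterPrefix_succ]
    change (coxeterPrefix n _).1 (liftT ⟨n, _⟩ (stdVec g (n + 1))) = _
    rw [liftT_stdVec_succ, map_add, map_zsmul, ih (by omega),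
      coxeterPrefix_stdVec_of_gt _ (by simp), partialSum_succ (n + 1)]
    module

noncomputable def coxeter (g : ℕ) : latticeStab g := coxeterPrefix (g - 1) le_rfl

theorem descend_coxeter_mk_stdVec {j : ℕ} (hj : j < g) :
    Multiplicative.toAdd (descend (coxeter g)) (mk g (stdVec g j)) =
      -mk g (stdVec g ((j + 1) % g)) := by
  rw [descend_mk, coxeter]
  rcases Nat.lt_or_ge j (g - 1) with hj' | hj'
  · rw [coxeterPrefix_stdVec_of_lt _ hj', map_neg, Nat.mod_eq_of_lt (by omega)]
  · obtain rfl : j = g - 1 := by omega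
    rw [coxeterPrefix_stdVec_self, Nat.sub_add_cancel (by omega), Nat.mod_self, map_sub,
      ← twos_eq_partialSum, mk_twos, zero_sub]

theorem descend_coxeter_pow_mk_stdVec (k : ℕ) {j : ℕ} (hj : j < g) :
    Multiplicative.toAdd (descend (coxeter g) ^ k) (mk g (stdVec g j)) =
      (-1 : ℤ) ^ k • mk g (stdVec g ((j + k) % g)) := by
  induction k generalizing j with
  | zero => rw [pow_zero, pow_zero, one_smul, add_zero, Nat.mod_eq_of_lt hj]; rfl
  | succ k ih =>
    rw [pow_succ, toAdd_mul, AddAut.add_apply, descend_coxeter_mk_stdVec hj, map_neg,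
      ih (Nat.mod_lt _ (by omega)), Nat.mod_add_mod, pow_succ, mul_neg_one, neg_smul,
      add_right_comm, add_assoc]

theorem descend_coxeter_pow_self :
    descend (coxeter g) ^ g = if Odd g then descend (rStab g) else 1 := by
  apply addAut_ext
  intro j
  rw [γ_eq_mk, descend_coxeter_pow_mk_stdVec _ j.isLt, Nat.add_mod_right,
    Nat.mod_eq_of_lt j.isLt]
  split_ifs with hg
  · rw [hg.neg_one_pow, neg_one_smul, descend_rStab_apply]
  · rw [(Nat.not_odd_iff_even.mp hg).neg_one_pow, one_smul, toAdd_one, AddAut.zero_apply]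

theorem rStab_mul_comm (e : latticeStab g) : rStab g * e = e * rStab g :=
  Subtype.ext <| LinearEquiv.ext fun x => (map_neg e.1 x).symm

theorem rStab_mul_self : rStab g * rStab g = 1 :=
  Subtype.ext <| LinearEquiv.ext neg_neg

theorem rStab_mul_mul_rStab_mul_inv (e : latticeStab g) : rStab g * e * rStab g * e⁻¹ = 1 := by
  rw [rStab_mul_comm, mul_assoc e, rStab_mul_self, mul_one, mul_inv_cancel]

noncomputable def genStab (g : ℕ) : Fin (g - 1) ⊕ Bool → latticeStab g :=
  Sum.elim tStab fun b => if b then rStab g else sStab g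

theorem genStab_inl (i : Fin (g - 1)) : genStab g (.inl i) = tStab i := rfl

theorem genStab_inr_false : genStab g (.inr false) = sStab g := rfl

theorem genStab_inr_true : genStab g (.inr true) = rStab g := rfl

theorem lift_genStab_coxeter :
    FreeGroup.lift (genStab g) (List.ofFn fun i => FreeGroup.of (Sum.inl i)).prod = coxeter g := by
  rw [map_list_prod, List.map_ofFn]
  rfl

theorem lift_descend_genStab_eq_one (r : FreeGroup (Fin (g - 1) ⊕ Bool)) (hr : r ∈ relsC g) :
    FreeGroup.lift (fun a => descend (genStab g a)) r = 1 := by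
  rw [show FreeGroup.lift (fun a => descend (genStab g a)) =
      descend.comp (FreeGroup.lift (genStab g)) from FreeGroup.ext_hom _ _ fun _ => rfl,
    MonoidHom.comp_apply]
  simp only [relsC, Set.mem_union, Set.mem_ofPred_eq, Set.mem_singleton_iff] at hr
  rcases hr with (((((((⟨j, k, hjk, rfl⟩ | ⟨j, k, hjk, rfl⟩) | rfl) | rfl) |
    ⟨j, rfl⟩) | rfl) | ⟨j, rfl⟩) | rfl) <;>
    simp only [map_mul (FreeGroup.lift (genStab g)), map_inv (FreeGroup.lift (genStab g)),
      map_pow (FreeGroup.lift (genStab g)), FreeGroup.lift_apply_of, genStab_inl,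
      genStab_inr_false, genStab_inr_true]
  · rw [mul_inv_eq_one.mpr
      (show tStab k * tStab j = tStab j * tStab k from Subtype.ext (liftT_commute hjk)), map_one]
  · rw [mul_inv_eq_one.mpr (show tStab j * tStab k * tStab j = tStab k * tStab j * tStab k from
      Subtype.ext (liftT_braid hjk)), map_one]
  · rw [lift_genStab_coxeter, map_mul, map_pow, descend_coxeter_pow_self]
    split_ifs
    · rw [map_inv, FreeGroup.lift_apply_of, genStab_inr_true, map_inv, mul_inv_cancel]
    · rw [map_one, map_one, mul_one]
  · rw [sq, show sStab g * sStab g = 1 from Subtype.ext liftS_mul_self, map_one]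
  · rw [show sStab g * tStab j * sStab g * tStab j = 1 from
      Subtype.ext (liftS_mul_liftT_mul_liftS_mul_liftT j), map_one]
  · rw [sq, rStab_mul_self, map_one]
  · rw [rStab_mul_mul_rStab_mul_inv, map_one]
  · rw [rStab_mul_mul_rStab_mul_inv, map_one]

end MN

open MN

theorem stmt8_general (g : ℕ) :
    ∃ (T : Fin (g-1) → AddAut (MN g)) (S R : AddAut (MN g)),
      IsT T ∧ IsS S ∧ (∀ x, R x = -x) ∧
      ∃ ψ : GC g →* Multiplicative (AddAut (MN g)),
        (∀ i : Fin (g-1), Multiplicative.toAdd (ψ (GC.t i)) = T i) ∧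
          Multiplicative.toAdd (ψ (GC.s g)) = S ∧ Multiplicative.toAdd (ψ (GC.ρ g)) = R := by
  refine ⟨fun i => Multiplicative.toAdd (descend (tStab i)),
    Multiplicative.toAdd (descend (sStab g)), Multiplicative.toAdd (descend (rStab g)),
    isT_descend_tStab, isS_descend_sStab, descend_rStab_apply,
    PresentedGroup.toGroup lift_descend_genStab_eq_one, fun i => ?_, ?_, ?_⟩ <;>
  exact congrArg Multiplicative.toAdd (PresentedGroup.toGroup.of _)

/-- The formulas for `T_i`, `S`, `R` define automorphisms of `M(g)` and there is a
homomorphism `ψ : G_C(g) → Aut(M(g))` with `ψ(t_i) = T_i`, `ψ(s) = S`, `ψ(ρ) = R`;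
i.e. `T_i`, `S`, `R` satisfy the relations (C1)-(C8). -/
theorem stmt8 (g : ℕ) (hg : 3 ≤ g) :
    ∃ (T : Fin (g-1) → AddAut (MN g)) (S R : AddAut (MN g)),
      IsT T ∧ IsS S ∧ (∀ x, R x = -x) ∧
      ∃ ψ : GC g →* Multiplicative (AddAut (MN g)),
        (∀ i : Fin (g-1), Multiplicative.toAdd (ψ (GC.t i)) = T i) ∧
          Multiplicative.toAdd (ψ (GC.s g)) = S ∧ Multiplicative.toAdd (ψ (GC.ρ g)) = R :=
  stmt8_general g
end

section
/- For g ≥ 3, let Y = (T_1 ∘ T_2 ∘ ⋯ ∘ T_{g−1})^{−1} be the inverse of the composition of the automorphisms T_1,…,T_{g−1} of M(g). Then Y(γ_i) = −γ_{i−1} for 2 ≤ i ≤ g and Y(γ_1) = −γ_g; consequently Y^k(γ_i) = (−1)^k γ_{i−k}, where indices are taken modulo g in {1,…,g}. -/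
/-! Write `X = T_1 ∘ ⋯ ∘ T_{g-1}`, so that `Y = X⁻¹`. For `i < g` only `T_i` moves `γ_i`, sending
it to `-γ_{i+1}`, which the `T_j` applied afterwards (`j < i`) fix; so `X(γ_i) = -γ_{i+1}`. The
generator `γ_g` is instead carried by `T_{g-1}, …, T_1` successively to
`γ_j + 2(γ_{j+1} + ⋯ + γ_g)`, ending at `γ_1 + 2(γ_2 + ⋯ + γ_g) = -γ_1` since
`2(γ_1 + ⋯ + γ_g) = 0`. Thus `X` permutes the generators cyclically up to sign, `Y` undoes this,
and the formula for `Y^k` follows by induction on `k`. -/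

theorem MN.two_zsmul_sum_γ (g : ℕ) : (2 : ℤ) • ∑ j : Fin g, γ j = (0 : MN g) := by
  let N := AddSubgroup.zmultiples (fun _ => (2 : ℤ) : Fin g → ℤ)
  change (2 : ℤ) • ∑ j : Fin g, (QuotientAddGroup.mk (Pi.single j 1) : (Fin g → ℤ) ⧸ N) = 0
  rw [← QuotientAddGroup.mk_sum, Finset.univ_sum_single, ← QuotientAddGroup.mk_zsmul,
    QuotientAddGroup.eq_zero_iff]
  exact ⟨1, by ext; simp⟩

namespace AddAut

variable {A : Type*} [Add A]

theorem list_sum_apply_of_forall_apply_eq (L : List (AddAut A)) {x : A}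
    (h : ∀ f ∈ L, f x = x) : L.sum x = x := by
  induction L with
  | nil => rfl
  | cons f L ih =>
    rw [List.sum_cons, add_apply, ih fun f' hf' => h f' (List.mem_cons_of_mem f hf'),
      h f List.mem_cons_self]

/-- `L.sum` is the composite `L[0] ∘ L[1] ∘ ⋯`, so the later entries act first. -/
theorem list_sum_apply_eq_of_getElem (L : List (AddAut A)) (i : ℕ) (hi : i < L.length)
    {x y : A} (hxy : L[i] x = y) (hlater : ∀ j (hj : j < L.length), i < j → L[j] x = x)
    (hearlier : ∀ j (hj : j < L.length), j < i → L[j] y = y) : L.sum x = y := by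
  induction L generalizing i with
  | nil => exact absurd hi (Nat.not_lt_zero i)
  | cons f L ih =>
    rw [List.sum_cons, add_apply]
    cases i with
    | zero =>
      rw [list_sum_apply_of_forall_apply_eq L fun f' hf' => ?_]
      · exact hxy
      obtain ⟨j, hj, rfl⟩ := List.getElem_of_mem hf'
      exact hlater (j + 1) (by simpa using hj) (Nat.succ_pos j)
    | succ i =>
      rw [ih i (by simpa using hi) hxy (fun j hj hij => hlater (j + 1) (by simpa using hj)
        (by omega)) (fun j hj hij => hearlier (j + 1) (by simpa using hj) (by omega))]
      exact hearlier 0 (by simp) (Nat.succ_pos i)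

end AddAut

namespace IsT

variable {g : ℕ} {T : Fin (g-1) → AddAut (MN g)}

theorem list_sum_apply_γ_idx (hT : IsT T) (i : Fin (g-1)) :
    (List.ofFn T).sum (γ (idx i)) = -γ (idx1 i) := by
  refine AddAut.list_sum_apply_eq_of_getElem _ i (by simp) (by simpa using (hT i).1) ?_ ?_
  · intro j hj hij
    rw [List.getElem_ofFn]
    exact (hT _).2.2 _ (by simp [idx, Fin.ext_iff]; omega) (by simp [idx, idx1, Fin.ext_iff]; omega)
  · intro j hj hji
    rw [List.getElem_ofFn, map_neg,
      (hT _).2.2 _ (by simp [idx, idx1, Fin.ext_iff]; omega) (by simp [idx1, Fin.ext_iff]; omega)]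

theorem drop_sum_apply_γ_last (hT : IsT T) {m : ℕ} (hm : m < g) :
    ((List.ofFn T).drop m).sum (γ ⟨g - 1, by omega⟩) =
      γ ⟨m, hm⟩ + (2 : ℤ) • ∑ k ∈ Finset.Ioi ⟨m, hm⟩, γ k := by
  induction Nat.le_sub_one_of_lt hm using Nat.decreasingInduction with
  | self =>
    rw [List.drop_eq_nil_of_le (by simp), List.sum_nil, AddAut.zero_apply,
      Finset.Ioi_eq_empty.2 (by simp [IsMax, Fin.le_iff_val_le_val]; omega)]
    simp
  | of_succ m hm' ih =>
    have hm1 : m + 1 < g := by omega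
    have hstep : T ⟨m, hm'⟩ (γ ⟨m + 1, hm1⟩) = γ ⟨m, hm⟩ + (2 : ℤ) • γ ⟨m + 1, hm1⟩ :=
      (hT ⟨m, hm'⟩).2.1
    have hfix : ∀ k ∈ Finset.Ioi (⟨m + 1, hm1⟩ : Fin g), T ⟨m, hm'⟩ (γ k) = γ k := fun k hk =>
      (hT _).2.2 k (by simp [idx, Fin.ext_iff, Fin.lt_def] at hk ⊢; omega)
        (by simp [idx1, Fin.ext_iff, Fin.lt_def] at hk ⊢; omega)
    have hIoi : Finset.Ioi (⟨m, hm⟩ : Fin g) = insert ⟨m + 1, hm1⟩ (Finset.Ioi ⟨m + 1, hm1⟩) := by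
      ext k
      simp only [Finset.mem_Ioi, Finset.mem_insert, Fin.ext_iff, Fin.lt_def]
      omega
    rw [List.drop_eq_getElem_cons (by simpa using hm'), List.sum_cons, AddAut.add_apply,
      ih hm1, List.getElem_ofFn, map_add, map_zsmul, map_sum, hstep, Finset.sum_congr rfl hfix,
      hIoi, Finset.sum_insert (by simp), smul_add]
    abel

theorem list_sum_apply_γ_sub_one (hT : IsT T) (h1 : 1 < g) (i : Fin g) :
    (List.ofFn T).sum (γ (i - ⟨1, h1⟩)) = -γ i := by
  by_cases hi : (i : ℕ) = 0
  · have hprev : i - ⟨1, h1⟩ = ⟨g - 1, by omega⟩ := by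
      ext
      rw [Fin.coe_sub_iff_lt.2 (by simp [Fin.lt_def]; omega)]
      simp [hi]
    have hi0 : i = ⟨0, by omega⟩ := Fin.ext hi
    have hIoi : Finset.Ioi i = Finset.univ.erase i := by
      ext k
      simp only [Finset.mem_Ioi, Fin.lt_def, hi, Finset.mem_erase, ne_eq, Fin.ext_iff,
        Finset.mem_univ, and_true]
      omega
    have hlast := hT.drop_sum_apply_γ_last (m := 0) (by omega)
    rw [List.drop_zero, ← hi0, hIoi, Finset.sum_erase_eq_sub (Finset.mem_univ i), smul_sub,
      MN.two_zsmul_sum_γ] at hlast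
    rw [hprev, hlast]
    abel
  · let j : Fin (g - 1) := ⟨i - 1, by omega⟩
    have hprev : i - ⟨1, h1⟩ = idx j := by
      ext
      rw [Fin.coe_sub_iff_le.2 (by simp [Fin.le_def]; omega)]
      rfl
    rw [hprev, hT.list_sum_apply_γ_idx j]
    congr
    ext
    simp only [idx1, j]
    omega

end IsT

theorem nsmul_apply_γ_of_apply_γ {g : ℕ} (h1 : 1 < g) (Y : AddAut (MN g))
    (hY : ∀ i : Fin g, Y (γ i) = -γ (i - ⟨1, h1⟩)) (k : ℕ) (i : Fin g) :
    (k • Y) (γ i) = (-1 : ℤ) ^ k • γ (i - ⟨k % g, Nat.mod_lt k (by omega)⟩) := by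
  have : NeZero g := ⟨by omega⟩
  induction k generalizing i with
  | zero =>
    rw [zero_nsmul, AddAut.zero_apply, pow_zero, one_smul]
    congr
    ext
    rw [Fin.coe_sub_iff_le.2 (by simp)]
    simp
  | succ k ih =>
    have hshift : (⟨k % g, Nat.mod_lt k (by omega)⟩ : Fin g) + ⟨1, h1⟩ =
        ⟨(k + 1) % g, Nat.mod_lt _ (by omega)⟩ := by
      ext
      show (k % g + 1) % g = (k + 1) % g
      rw [Nat.add_mod k 1 g, Nat.mod_eq_of_lt h1]
    rw [succ_nsmul', AddAut.add_apply, ih, map_zsmul, hY, sub_sub, hshift, pow_succ, mul_smul,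
      neg_one_zsmul, smul_neg]

/-- If `Y = (T_1 ∘ ⋯ ∘ T_{g-1})⁻¹` then `Y(γ_i) = -γ_{i-1}` (indices mod `g`,
in particular `Y(γ_1) = -γ_g`), and consequently `Y^k(γ_i) = (-1)^k γ_{i-k}`. -/
theorem stmt9 (g : ℕ) (hg : 3 ≤ g) (T : Fin (g-1) → AddAut (MN g)) (hT : IsT T) :
    ∀ Y : AddAut (MN g), Y = -((List.ofFn T).sum) →
      (∀ i : Fin g, Y (γ i) = - γ (i - ⟨1, by omega⟩)) ∧
      (∀ (k : ℕ) (i : Fin g),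
        (k • Y) (γ i) = (-1 : ℤ) ^ k • γ (i - ⟨k % g, Nat.mod_lt k (by omega)⟩)) := by
  rintro Y rfl
  have hY : ∀ i : Fin g, (-(List.ofFn T).sum) (γ i) = -γ (i - ⟨1, by omega⟩) := fun i => by
    rw [← neg_neg (γ i), map_neg, ← hT.list_sum_apply_γ_sub_one (by omega) i,
      AddAut.neg_apply_self]
  exact ⟨hY, nsmul_apply_γ_of_apply_γ (by omega) _ hY⟩
end

section
/- For g ≥ 2, let G_H±(g) be the presented group with generators t_1,…,t_{2g+1}, ρ, s and defining relations: t_k t_j = t_j t_k for |k−j| > 1; t_j t_{j+1} t_j = t_{j+1} t_j t_{j+1} for j = 1,…,2g; (t_1 t_2 ⋯ t_{2g+1})^{2g+2} = 1; ρ = t_1 t_2 ⋯ t_{2g+1} t_{2g+1} ⋯ t_2 t_1; ρ² = 1; ρ t_1 ρ = t_1; s² = 1; s t_1 s = t_1^{−1}; and ρ s ρ = s. Then the abelianization of G_H±(g) is isomorphic to Z/2 ⊕ Z/2, generated by the images of t_1 and s. -/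
open FreeGroup in
/-- The relations for the extended hyperelliptic mapping class group `M^{h±}(S_g)`:
the Birman–Hilden relations together with `s² = 1`, `s t_1 s = t_1⁻¹`, `ρ s ρ = s`.
The generator `Sum.inl i` is `t_{i+1}` (`i : Fin (2g+1)`), `Sum.inr true` is `ρ` and
`Sum.inr false` is `s`. -/
def relsHpm (g : ℕ) : Set (FreeGroup (Fin (2*g+1) ⊕ Bool)) :=
  -- t_k t_j = t_j t_k for |k-j| > 1
  {r | ∃ j k : Fin (2*g+1), ((j : ℕ) + 1 < k ∨ (k : ℕ) + 1 < j) ∧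
        r = of (.inl k) * of (.inl j) * (of (.inl j) * of (.inl k))⁻¹} ∪
  -- braid relations
  {r | ∃ j k : Fin (2*g+1), (j : ℕ) + 1 = k ∧
        r = of (.inl j) * of (.inl k) * of (.inl j) *
            (of (.inl k) * of (.inl j) * of (.inl k))⁻¹} ∪
  -- (t_1 ⋯ t_{2g+1})^{2g+2} = 1
  {(List.ofFn (fun i : Fin (2*g+1) => of (Sum.inl i : Fin (2*g+1) ⊕ Bool))).prod ^ (2*g+2)} ∪
  -- ρ = t_1 ⋯ t_{2g+1} t_{2g+1} ⋯ t_1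
  {(List.ofFn (fun i : Fin (2*g+1) => of (Sum.inl i : Fin (2*g+1) ⊕ Bool))).prod *
      ((List.ofFn (fun i : Fin (2*g+1) => of (Sum.inl i : Fin (2*g+1) ⊕ Bool))).reverse).prod *
      (of (Sum.inr true : Fin (2*g+1) ⊕ Bool))⁻¹} ∪
  -- ρ² = 1
  {of (Sum.inr true : Fin (2*g+1) ⊕ Bool) ^ 2} ∪
  -- ρ t_1 ρ = t_1
  {of (Sum.inr true : Fin (2*g+1) ⊕ Bool) * of (.inl 0) * of (.inr true) * (of (.inl 0))⁻¹} ∪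
  -- s² = 1
  {of (Sum.inr false : Fin (2*g+1) ⊕ Bool) ^ 2} ∪
  -- s t_1 s = t_1⁻¹
  {of (Sum.inr false : Fin (2*g+1) ⊕ Bool) * of (.inl 0) * of (.inr false) * of (.inl 0)} ∪
  -- ρ s ρ = s
  {of (Sum.inr true : Fin (2*g+1) ⊕ Bool) * of (.inr false) * of (.inr true) *
      (of (.inr false))⁻¹}

/-- `G_H±(g)`, a presentation of the extended hyperelliptic mapping class group
`M^{h±}(S_g)`. -/
def GHpm (g : ℕ) : Type := PresentedGroup (relsHpm g)

instance (g : ℕ) : Group (GHpm g) := by unfold GHpm; infer_instance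

/-- The generator `t_{i+1}` of `G_H±(g)`. -/
def GHpm.t {g : ℕ} (i : Fin (2*g+1)) : GHpm g :=
  PresentedGroup.of (rels := relsHpm g) (Sum.inl i)

/-- The generator `s` of `G_H±(g)`. -/
def GHpm.s (g : ℕ) : GHpm g := PresentedGroup.of (rels := relsHpm g) (Sum.inr false)

/-! In any abelian quotient the braid relations identify every `t_i` with `t_1`, the relations
`s t_1 s = t_1⁻¹` and `s² = 1` force `t_1² = 1`, and then `ρ = t_1^{2(2g+1)} = 1`. So the
abelianization is generated by two elements of order dividing `2`. Conversely
`t_i ↦ (1, 0)`, `s ↦ (0, 1)`, `ρ ↦ 0` respects every relation, so it is all of `ℤ/2 ⊕ ℤ/2`. -/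

section ZModTwoPair

variable {A : Type*} [CommGroup A]

def zmodTwoPairLift (x y : A) (hx : x ^ 2 = 1) (hy : y ^ 2 = 1) :
    Multiplicative (ZMod 2 × ZMod 2) →* A where
  toFun m := x ^ m.toAdd.1.val * y ^ m.toAdd.2.val
  map_one' := by simp
  map_mul' m n := by
    simp only [toAdd_mul, Prod.fst_add, Prod.snd_add, ZMod.val_add, ← pow_eq_pow_mod _ hx,
      ← pow_eq_pow_mod _ hy, pow_add]
    exact mul_mul_mul_comm _ _ _ _

lemma zmodTwoPairLift_ofAdd_one_zero (x y : A) (hx : x ^ 2 = 1) (hy : y ^ 2 = 1) :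
    zmodTwoPairLift x y hx hy (Multiplicative.ofAdd (1, 0)) = x := by
  simp [zmodTwoPairLift, ZMod.val_one]

lemma zmodTwoPairLift_ofAdd_zero_one (x y : A) (hx : x ^ 2 = 1) (hy : y ^ 2 = 1) :
    zmodTwoPairLift x y hx hy (Multiplicative.ofAdd (0, 1)) = y := by
  simp [zmodTwoPairLift, ZMod.val_one]

lemma MonoidHom.comp_zmodTwoPairLift {B : Type*} [CommGroup B] (f : A →* B) (x y : A)
    (hx : x ^ 2 = 1) (hy : y ^ 2 = 1) :
    f.comp (zmodTwoPairLift x y hx hy) =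
      zmodTwoPairLift (f x) (f y) (by rw [← map_pow, hx, map_one])
        (by rw [← map_pow, hy, map_one]) := by
  ext m
  simp [zmodTwoPairLift]

lemma zmodTwoPairLift_ofAdd_eq_id :
    zmodTwoPairLift (Multiplicative.ofAdd ((1 : ZMod 2), (0 : ZMod 2)))
      (Multiplicative.ofAdd (0, 1)) (by decide) (by decide) = MonoidHom.id _ :=
  MonoidHom.ext <| by decide

def mulEquivZModTwoPair (f : A →* Multiplicative (ZMod 2 × ZMod 2)) {x y : A}
    (hxy : Subgroup.closure {x, y} = ⊤) (hx : x ^ 2 = 1) (hy : y ^ 2 = 1)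
    (hfx : f x = Multiplicative.ofAdd (1, 0)) (hfy : f y = Multiplicative.ofAdd (0, 1)) :
    A ≃* Multiplicative (ZMod 2 × ZMod 2) :=
  f.toMulEquiv (zmodTwoPairLift x y hx hy)
    (MonoidHom.eq_of_eqOn_dense hxy <| by
      rintro _ (rfl | rfl)
      · simp [hfx, zmodTwoPairLift_ofAdd_one_zero]
      · simp [hfy, zmodTwoPairLift_ofAdd_zero_one])
    (by simp_rw [f.comp_zmodTwoPairLift, hfx, hfy]; exact zmodTwoPairLift_ofAdd_eq_id)

end ZModTwoPair

namespace GHpm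

variable {g : ℕ}

def rho (g : ℕ) : GHpm g := PresentedGroup.of (rels := relsHpm g) (Sum.inr true)

lemma t_mul_t_mul_t {j k : Fin (2*g+1)} (h : (j : ℕ) + 1 = k) :
    t j * t k * t j = t k * t j * t k :=
  -- `relsHpm g` is a left-nested union of nine sets; the `.inl`/`.inr` path selects one of them
  PresentedGroup.mk_eq_mk_of_mul_inv_mem <|
    .inl <| .inl <| .inl <| .inl <| .inl <| .inl <| .inl <| .inr ⟨j, k, h, rfl⟩

lemma s_sq : s g ^ 2 = 1 :=
  PresentedGroup.one_of_mem <| .inl <| .inl <| .inr rfl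

lemma s_mul_t_zero_mul_s_mul_t_zero : s g * t 0 * s g * t 0 = 1 :=
  PresentedGroup.one_of_mem <| .inl <| .inr rfl

lemma prod_t_mul_prod_t_reverse :
    (List.ofFn (t (g := g))).prod * (List.ofFn t).reverse.prod = rho g := by
  have h := PresentedGroup.mk_eq_mk_of_mul_inv_mem (rels := relsHpm g)
    (.inl <| .inl <| .inl <| .inl <| .inl <| .inr rfl)
  rw [map_mul, map_list_prod, map_list_prod, List.map_ofFn, List.map_reverse, List.map_ofFn] at h
  exact h

variable {A : Type*} [CommGroup A]

section MapToCommGroup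

variable (χ : GHpm g →* A)

lemma map_t_eq_map_t_zero (i : Fin (2*g+1)) : χ (t i) = χ (t 0) := by
  induction i using Fin.induction with
  | zero => rfl
  | succ i ih =>
    have braid := congrArg χ (t_mul_t_mul_t (j := i.castSucc) (k := i.succ) rfl)
    simp only [map_mul, mul_comm (χ (t i.succ)) (χ (t i.castSucc))] at braid
    rw [← ih]
    exact (mul_left_cancel braid).symm

lemma map_s_sq : χ (s g) ^ 2 = 1 := by
  rw [← map_pow, s_sq, map_one]

lemma map_t_zero_sq : χ (t 0) ^ 2 = 1 := by
  have h := congrArg χ s_mul_t_zero_mul_s_mul_t_zero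
  rw [map_one, map_mul, map_mul, map_mul] at h
  calc χ (t 0) ^ 2 = χ (s g) ^ 2 * χ (t 0) ^ 2 := by rw [map_s_sq, one_mul]
    _ = χ (s g) * χ (t 0) * χ (s g) * χ (t 0) := by rw [sq, sq]; ac_rfl
    _ = 1 := h

lemma map_rho : χ (rho g) = 1 := by
  have hprod : (List.ofFn (χ ∘ t)).prod = χ (t 0) ^ (2*g+1) := by
    rw [show ⇑χ ∘ t = fun _ => χ (t 0) from funext (map_t_eq_map_t_zero χ), List.ofFn_const,
      List.prod_replicate]
  rw [← prod_t_mul_prod_t_reverse, map_mul, map_list_prod, map_list_prod, List.map_reverse,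
    List.prod_reverse, List.map_ofFn, hprod, ← sq, ← pow_mul, pow_mul', map_t_zero_sq, one_pow]

end MapToCommGroup

lemma lift_eq_one_of_mem_relsHpm (x y : A) (hx : x ^ 2 = 1) (hy : y ^ 2 = 1) :
    ∀ r ∈ relsHpm g,
      FreeGroup.lift (Sum.elim (fun _ => x) fun b => bif b then 1 else y) r = 1 := by
  set f : Fin (2*g+1) ⊕ Bool → A := Sum.elim (fun _ => x) fun b => bif b then 1 else y
  have hprod : FreeGroup.lift f
      (List.ofFn fun i : Fin (2*g+1) => FreeGroup.of (Sum.inl i : Fin (2*g+1) ⊕ Bool)).prod =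
      x ^ (2*g+1) := by
    simp [f, map_list_prod, List.map_ofFn, Function.comp_def, pow_succ']
  have hprod_rev : FreeGroup.lift f (List.ofFn fun i => FreeGroup.of (Sum.inl i)).reverse.prod =
      x ^ (2*g+1) := by
    rw [map_list_prod, List.map_reverse, List.prod_reverse, ← map_list_prod, hprod]
  have hx_even (n : ℕ) : x ^ (2 * n) = 1 := by rw [pow_mul, hx, one_pow]
  rintro r ((((((((⟨j, k, _, rfl⟩ | ⟨j, k, _, rfl⟩) | rfl) | rfl) | rfl) | rfl) | rfl) | rfl) | rfl)
  all_goals simp only [map_mul, map_inv, map_pow, hprod, hprod_rev, FreeGroup.lift_apply_of, f,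
    Sum.elim_inl, Sum.elim_inr, cond_true, cond_false]
  · exact mul_inv_cancel _
  · exact mul_inv_cancel _
  · rw [← pow_mul, show (2*g+1) * (2*g+2) = 2 * ((2*g+1) * (g+1)) by ring, hx_even]
  · rw [inv_one, mul_one, ← pow_add, ← two_mul, hx_even]
  · exact one_pow 2
  · rw [one_mul, mul_one, mul_inv_cancel]
  · exact hy
  · calc y * x * y * x = y ^ 2 * x ^ 2 := by rw [sq, sq]; ac_rfl
      _ = 1 := by rw [hx, hy, one_mul]
  · rw [one_mul, mul_one, mul_inv_cancel]

def toCommGroup (x y : A) (hx : x ^ 2 = 1) (hy : y ^ 2 = 1) : GHpm g →* A :=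
  PresentedGroup.toGroup (lift_eq_one_of_mem_relsHpm x y hx hy)

lemma toCommGroup_t (x y : A) (hx : x ^ 2 = 1) (hy : y ^ 2 = 1) (i : Fin (2*g+1)) :
    toCommGroup x y hx hy (t i) = x :=
  PresentedGroup.toGroup.of _

lemma toCommGroup_s (x y : A) (hx : x ^ 2 = 1) (hy : y ^ 2 = 1) :
    toCommGroup x y hx hy (s g) = y :=
  PresentedGroup.toGroup.of _

lemma closure_of_t_zero_of_s :
    Subgroup.closure {Abelianization.of (t (0 : Fin (2*g+1))), Abelianization.of (s g)} = ⊤ := by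
  refine eq_top_iff.2 fun y _ => QuotientGroup.induction_on y fun x => ?_
  refine PresentedGroup.generated_by (relsHpm g) ((Subgroup.closure _).comap Abelianization.of) ?_ x
  rintro (i | _ | _)
  · exact Subgroup.subset_closure (.inl (map_t_eq_map_t_zero Abelianization.of i))
  · exact Subgroup.subset_closure (.inr rfl)
  · show Abelianization.of (rho g) ∈ Subgroup.closure _
    rw [map_rho]
    exact Subgroup.one_mem _

end GHpm

theorem stmt15_general (g : ℕ) :
    Nonempty (Abelianization (GHpm g) ≃* Multiplicative (ZMod 2 × ZMod 2)) ∧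
    Subgroup.closure
      {Abelianization.of (GHpm.t (0 : Fin (2*g+1))),
       Abelianization.of (GHpm.s g)} = ⊤ := by
  have hx : Multiplicative.ofAdd ((1 : ZMod 2), (0 : ZMod 2)) ^ 2 = 1 := by decide
  have hy : Multiplicative.ofAdd ((0 : ZMod 2), (1 : ZMod 2)) ^ 2 = 1 := by decide
  let f := Abelianization.lift (GHpm.toCommGroup (g := g) _ _ hx hy)
  refine ⟨⟨mulEquivZModTwoPair f GHpm.closure_of_t_zero_of_s (GHpm.map_t_zero_sq _)
    (GHpm.map_s_sq _) ?_ ?_⟩, GHpm.closure_of_t_zero_of_s⟩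
  · rw [Abelianization.lift_apply_of, GHpm.toCommGroup_t]
  · rw [Abelianization.lift_apply_of, GHpm.toCommGroup_s]

/-- `H_1(M^{h±}(S_g)) = ℤ/2 ⊕ ℤ/2`, generated by the images of `t_1` and `s`. -/
theorem stmt15 (g : ℕ) (hg : 2 ≤ g) :
    Nonempty (Abelianization (GHpm g) ≃* Multiplicative (ZMod 2 × ZMod 2)) ∧
    Subgroup.closure
      {Abelianization.of (GHpm.t (0 : Fin (2*g+1))),
       Abelianization.of (GHpm.s g)} = ⊤ :=
  stmt15_general g
end
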